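/- Let X ∈ ℝ^{d×n}, and for i = 1,…,L let σᵢ : ℝ^{dᵢ×n} → ℝ^{dᵢ×n} be ρᵢ-Lipschitz with respect to the Frobenius norm with σᵢ(0)=0, and let aᵢ, sᵢ > 0, with d₀ = d. For each layer i let Wᵢ ∈ ℝ^{cᵢ×rᵢ} be a convolutional weight and let γᵢ(Wᵢ) ∈ ℝ^{dᵢ×d_{i−1}} be the fully connected matrix built from Wᵢ via mᵢ = dᵢ/cᵢ fixed injective index maps. Define the hypothesis family H = { σ_L(γ_L(W_L) σ_{L−1}(γ_{L−1}(W_{L−1}) ⋯ σ₁(γ₁(W₁) X) ⋯)) : ‖Wᵢ‖_F ≤ aᵢ and ‖γᵢ(Wᵢ)‖_σ ≤ sᵢ for all i } ⊆ ℝ^{d_L×n}, and let R_W = (2∏_{i=1}^{L} ρᵢ sᵢ)·(Σ_{i=1}^{L} cᵢ² rᵢ² aᵢ √(dᵢ/cᵢ) / sᵢ)·L². Then for every ε > 0 there exists a finite set U of matrices in ℝ^{d_L×n} with ln|U| ≤ (‖X‖_F · R_W / ε)^{1/2} such that every element of H is within Frobenius distance ε of some element of U. -/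

import Mathlib

noncomputable def frobNorm {α β : Type*} [Fintype α] [Fintype β] (M : Matrix α β ℝ) : ℝ :=
  Real.sqrt (∑ i, ∑ j, (M i j) ^ 2)

noncomputable def specNorm {α β : Type*} [Fintype α] [Fintype β] [DecidableEq β]
    (M : Matrix α β ℝ) : ℝ :=
  ‖LinearMap.toContinuousLinearMap (Matrix.toEuclideanLin M)‖

/-- The fully connected matrix `γ(W)` built from a convolutional weight `W ∈ ℝ^{c×r}` via
`m` index maps `S k : Fin r → Fin d`. -/
noncomputable def gamma {c r d m : ℕ} (S : Fin m → Fin r → Fin d)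
    (W : Matrix (Fin c) (Fin r) ℝ) : Matrix (Fin c × Fin m) (Fin d) ℝ :=
  fun ik j => ∑ p, if S ik.2 p = j then W ik.1 p else 0

noncomputable def netOutput {n : ℕ} (d : ℕ → ℕ)
    (C : ∀ i : ℕ, Matrix (Fin (d (i+1))) (Fin (d i)) ℝ)
    (σ : ∀ i : ℕ, Matrix (Fin (d (i+1))) (Fin n) ℝ → Matrix (Fin (d (i+1))) (Fin n) ℝ)
    (X : Matrix (Fin (d 0)) (Fin n) ℝ) : (ℓ : ℕ) → Matrix (Fin (d ℓ)) (Fin n) ℝ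
  | 0 => X
  | (ℓ+1) => σ ℓ (C ℓ * netOutput d C σ X ℓ)

/-!
A weight ball `{W : ‖W‖_F ≤ a}` in `ℝ^{c×r}` has, by comparing volumes of disjoint balls, an
internal `δ`-net of size at most `(1 + 2a/δ)^{cr} ≤ exp (cr √(2a/δ))`. Since
`‖γ(W)‖_σ ≤ ‖γ(W)‖_F = √m ‖W‖_F`, such a net yields a net of each layer's admissible matrices
in spectral norm. Replacing the layers one by one and peeling off Lipschitz constants shows that
relative spectral errors `η` in all `L` layers move the output by at most `L η ∏ ρᵢ sᵢ ‖X‖_F`;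
taking `η = ε / (L ∏ ρᵢ sᵢ ‖X‖_F)`, the outputs of the finitely many net networks form an
`ε`-cover, and Cauchy–Schwarz over the layers turns the sum of the log-sizes of the nets into
the square root in the bound.
-/

open Metric Module
open scoped NNReal ENNReal

section Covering

open MeasureTheory

variable {E : Type*} [NormedAddCommGroup E] [NormedSpace ℝ E] [FiniteDimensional ℝ E]

theorem card_le_of_isSeparated_of_subset_closedBall {A : ℝ} {δ : ℝ≥0} (hA : 0 ≤ A) (hδ : 0 < δ)
    {T : Finset E} (hT : (T : Set E) ⊆ closedBall 0 A) (hsep : IsSeparated δ (T : Set E)) :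
    (T.card : ℝ) ≤ (1 + 2 * A / δ) ^ finrank ℝ E := by
  borelize E
  set μ : Measure E := Measure.addHaar
  have hr : (0 : ℝ) < δ / 2 := by positivity
  have hdisj : (T : Set E).PairwiseDisjoint (ball · (δ / 2)) := fun x hx y hy hxy ↦
    ball_disjoint_ball <| by
      have : (δ : ℝ≥0∞) < edist x y := hsep hx hy hxy
      rw [edist_nndist, ENNReal.coe_lt_coe, ← NNReal.coe_lt_coe, coe_nndist] at this
      linarith
  have hvol : ∑ x ∈ T, μ (ball x (δ / 2)) ≤ μ (closedBall 0 (A + δ / 2)) := by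
    rw [← measure_biUnion_finset hdisj fun _ _ ↦ measurableSet_ball]
    refine measure_mono <| Set.iUnion₂_subset fun x hx ↦ ball_subset_closedBall.trans <|
      closedBall_subset_closedBall' ?_
    linarith [mem_closedBall.1 (hT hx)]
  simp only [Measure.addHaar_ball_of_pos μ _ hr, Finset.sum_const, nsmul_eq_mul,
    Measure.addHaar_closedBall μ _ (by positivity : 0 ≤ A + δ / 2), ← mul_assoc] at hvol
  rw [ENNReal.mul_le_mul_iff_left (measure_ball_pos μ _ one_pos).ne' measure_ball_lt_top.ne,
    ← ENNReal.ofReal_natCast, ← ENNReal.ofReal_mul (by positivity),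
    ENNReal.ofReal_le_ofReal_iff (by positivity)] at hvol
  have : (1 + 2 * A / δ) ^ finrank ℝ E = (A + δ / 2) ^ finrank ℝ E / (δ / 2) ^ finrank ℝ E := by
    rw [← div_pow]; congr 1; field_simp; ring
  rw [this, le_div_iff₀ (by positivity)]
  exact hvol

theorem packingNumber_le_of_subset_closedBall {K : Set E} {A : ℝ} {δ : ℝ≥0} (hA : 0 ≤ A)
    (hδ : 0 < δ) (hK : K ⊆ closedBall 0 A) :
    packingNumber δ K ≤ ⌊(1 + 2 * A / δ) ^ finrank ℝ E⌋₊ := by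
  refine iSup₂_le fun C hCK ↦ iSup_le fun hC ↦ ?_
  by_contra! h
  obtain ⟨t, htC, ht⟩ := Set.exists_subset_encard_eq (Order.add_one_le_of_lt h)
  rw [← ENat.natCast_one, ← ENat.natCast_add] at ht
  obtain ⟨T, rfl⟩ := (Set.finite_of_encard_eq_coe ht).exists_finset_coe
  rw [Set.encard_coe_eq_coe_finsetCard, Nat.cast_inj] at ht
  have := Nat.le_floor <| card_le_of_isSeparated_of_subset_closedBall hA hδ
    ((htC.trans hCK).trans hK) (hC.subset htC)
  omega

theorem exists_finset_isCover_card_le {K : Set E} {A : ℝ} {δ : ℝ≥0} (hA : 0 ≤ A)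
    (hδ : 0 < δ) (hK : K ⊆ closedBall 0 A) :
    ∃ S : Finset E, (S : Set E) ⊆ K ∧ IsCover δ K S ∧
      (S.card : ℝ) ≤ (1 + 2 * A / δ) ^ finrank ℝ E := by
  have hN := (coveringNumber_le_packingNumber δ K).trans
    (packingNumber_le_of_subset_closedBall hA hδ hK)
  have hfin := finite_minimalCover (ε := δ) (A := K)
  refine ⟨hfin.toFinset, by simpa using minimalCover_subset, ?_, ?_⟩
  · simpa using isCover_minimalCover (ne_top_of_le_ne_top (by simp) hN)
  · rw [← encard_minimalCover (ne_top_of_le_ne_top (by simp) hN),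
      hfin.encard_eq_coe_toFinset_card, Nat.cast_le] at hN
    exact (Nat.cast_le.2 hN).trans (Nat.floor_le (by positivity))

theorem Real.one_add_le_exp_sqrt {x : ℝ} (hx : 0 ≤ x) : 1 + x ≤ Real.exp √x := by
  set u := √x
  have hu : 0 ≤ u := Real.sqrt_nonneg x
  have hexp : (1 + u / 2 + (u / 2) ^ 2 / 2) ^ 2 ≤ Real.exp u := by
    rw [← add_halves u, Real.exp_add, ← sq, add_halves]
    exact pow_le_pow_left₀ (by positivity) (Real.quadratic_le_exp_of_nonneg (by positivity)) 2
  nlinarith [Real.sq_sqrt hx, mul_nonneg hu (sq_nonneg (u - 2)), pow_nonneg hu 4]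

theorem exists_finset_cover_card_le_exp {K : Set E} {A c κ : ℝ} (hA : 0 ≤ A)
    (hK : K ⊆ closedBall 0 A) (hc : 0 ≤ c) (hκ : 0 < κ) :
    ∃ S : Finset E, (S : Set E) ⊆ K ∧ (∀ x ∈ K, ∃ y ∈ S, c * ‖x - y‖ ≤ κ) ∧
      (S.card : ℝ) ≤ Real.exp (finrank ℝ E * √(2 * c * A / κ)) := by
  rcases hc.eq_or_lt with rfl | hc
  · rcases K.eq_empty_or_nonempty with rfl | ⟨x₀, hx₀⟩
    · exact ⟨∅, by simp, by simp, by simp⟩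
    · exact ⟨{x₀}, by simpa using hx₀, fun _ _ ↦ ⟨x₀, by simp, by simpa using hκ.le⟩, by simp⟩
  obtain ⟨δ, hδ⟩ : ∃ δ : ℝ≥0, (δ : ℝ) = κ / c := ⟨⟨κ / c, by positivity⟩, rfl⟩
  obtain ⟨S, hSK, hS, hcard⟩ :=
    exists_finset_isCover_card_le hA (by rw [← NNReal.coe_pos, hδ]; positivity) hK
  refine ⟨S, hSK, fun x hx ↦ ?_, hcard.trans ?_⟩
  · obtain ⟨y, hyS, hxy⟩ := Set.mem_iUnion₂.1 (isCover_iff_subset_iUnion_closedBall.1 hS hx)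
    refine ⟨y, hyS, ?_⟩
    rw [mem_closedBall, dist_eq_norm] at hxy
    rwa [hδ, le_div_iff₀ hc, mul_comm] at hxy
  · rw [Real.exp_nat_mul, hδ]
    refine pow_le_pow_left₀ (by positivity) ?_ _
    rw [show 2 * A / (κ / c) = 2 * c * A / κ by field_simp]
    exact Real.one_add_le_exp_sqrt (by positivity)

end Covering

section Matrix

open Matrix

attribute [local instance] Matrix.frobeniusNormedAddCommGroup Matrix.frobeniusNormedSpace

variable {α β γ : Type*} [Fintype α] [Fintype β] [Fintype γ]

theorem frobNorm_eq_norm (M : Matrix α β ℝ) : frobNorm M = ‖M‖ := by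
  simp [frobNorm, Matrix.frobenius_norm_def, Real.sqrt_eq_rpow]

theorem frobNorm_sq_eq_sum_norm_col_sq (M : Matrix α β ℝ) :
    frobNorm M ^ 2 = ∑ j, ‖(WithLp.toLp 2 fun i ↦ M i j : EuclideanSpace ℝ α)‖ ^ 2 := by
  rw [frobNorm, Real.sq_sqrt (by positivity), Finset.sum_comm]
  simp [EuclideanSpace.norm_sq_eq]

theorem frobNorm_nonneg (M : Matrix α β ℝ) : 0 ≤ frobNorm M := Real.sqrt_nonneg _

theorem frobNorm_add_le (A B : Matrix α β ℝ) : frobNorm (A + B) ≤ frobNorm A + frobNorm B := by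
  simpa only [frobNorm_eq_norm] using norm_add_le A B

theorem specNorm_nonneg [DecidableEq β] (M : Matrix α β ℝ) : 0 ≤ specNorm M := norm_nonneg _

theorem norm_mulVec_le_specNorm [DecidableEq β] (M : Matrix α β ℝ) (x : EuclideanSpace ℝ β) :
    ‖(WithLp.toLp 2 (M *ᵥ x) : EuclideanSpace ℝ α)‖ ≤ specNorm M * ‖x‖ :=
  (LinearMap.toContinuousLinearMap (Matrix.toEuclideanLin M)).le_opNorm x

theorem specNorm_le_frobNorm [DecidableEq β] (M : Matrix α β ℝ) : specNorm M ≤ frobNorm M := by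
  refine ContinuousLinearMap.opNorm_le_bound _ (frobNorm_nonneg M) fun x ↦ ?_
  calc ‖(WithLp.toLp 2 (M *ᵥ x) : EuclideanSpace ℝ α)‖
      = ‖M * Matrix.replicateCol Unit x‖ := by
        rw [← Matrix.replicateCol_mulVec, Matrix.frobenius_norm_replicateCol]
    _ ≤ ‖M‖ * ‖Matrix.replicateCol Unit x‖ := Matrix.frobenius_norm_mul _ _
    _ = frobNorm M * ‖x‖ := by rw [frobNorm_eq_norm, Matrix.frobenius_norm_replicateCol]

theorem frobNorm_mul_le [DecidableEq β] (A : Matrix α β ℝ) (B : Matrix β γ ℝ) :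
    frobNorm (A * B) ≤ specNorm A * frobNorm B := by
  refine (pow_le_pow_iff_left₀ (frobNorm_nonneg _)
    (mul_nonneg (specNorm_nonneg A) (frobNorm_nonneg B)) two_ne_zero).1 ?_
  rw [mul_pow, frobNorm_sq_eq_sum_norm_col_sq, frobNorm_sq_eq_sum_norm_col_sq, Finset.mul_sum]
  refine Finset.sum_le_sum fun j _ ↦ ?_
  have hcol : (fun i ↦ (A * B) i j) = A *ᵥ fun k ↦ B k j := by
    ext i; simp [Matrix.mul_apply, Matrix.mulVec, dotProduct]
  rw [← mul_pow, hcol]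
  exact pow_le_pow_left₀ (norm_nonneg _) (norm_mulVec_le_specNorm A (WithLp.toLp 2 _)) 2

theorem frobNorm_reindex {α' : Type*} [Fintype α'] (e : α ≃ α') (M : Matrix α β ℝ) :
    frobNorm (Matrix.reindex e (Equiv.refl β) M) = frobNorm M := by
  simp only [frobNorm, Matrix.reindex_apply, Matrix.submatrix_apply, Equiv.refl_symm,
    Equiv.refl_apply]
  rw [Equiv.sum_comp e.symm (fun i ↦ ∑ j, M i j ^ 2)]

theorem sum_sq_sum_ite_eq_of_injective {ι κ : Type*} [Fintype ι] [Fintype κ] [DecidableEq κ]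
    {f : ι → κ} (hf : Function.Injective f) (w : ι → ℝ) :
    ∑ j, (∑ p, if f p = j then w p else 0) ^ 2 = ∑ p, w p ^ 2 := by
  classical
  set v : κ → ℝ := fun j ↦ ∑ p, if f p = j then w p else 0
  have hv : ∀ p, v (f p) = w p := fun p ↦ by simp_rw [v, hf.eq_iff]; simp
  calc ∑ j, v j ^ 2 = ∑ j, ∑ p, if f p = j then v j * w p else 0 := by
        simp only [sq, v, Finset.mul_sum, mul_ite, mul_zero]
    _ = ∑ p, v (f p) * w p := by rw [Finset.sum_comm]; simp
    _ = ∑ p, w p ^ 2 := by simp only [hv, sq]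

section Gamma

variable {c r d m : ℕ} (S : Fin m → Fin r → Fin d)

theorem gamma_sub (W W' : Matrix (Fin c) (Fin r) ℝ) :
    gamma S (W - W') = gamma S W - gamma S W' := by
  ext ik j
  simp only [gamma, Matrix.sub_apply, ← Finset.sum_sub_distrib]
  exact Finset.sum_congr rfl fun p _ ↦ by split_ifs <;> simp

theorem frobNorm_gamma (hS : ∀ k, Function.Injective (S k)) (W : Matrix (Fin c) (Fin r) ℝ) :
    frobNorm (gamma S W) = √m * frobNorm W := by
  rw [frobNorm, frobNorm, ← Real.sqrt_mul (Nat.cast_nonneg m), Fintype.sum_prod_type]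
  congr 1
  simp only [gamma, sum_sq_sum_ite_eq_of_injective (hS _), Finset.sum_const, Finset.card_univ,
    Fintype.card_fin, nsmul_eq_mul, Finset.mul_sum]

end Gamma

def convLayerSet {c r d m d' : ℕ} (S : Fin m → Fin r → Fin d) (e : Fin c × Fin m ≃ Fin d')
    (a s : ℝ) : Set (Matrix (Fin d') (Fin d) ℝ) :=
  {C | specNorm C ≤ s ∧ ∃ W, frobNorm W ≤ a ∧ C = reindex e (Equiv.refl (Fin d)) (gamma S W)}

theorem exists_finset_subset_convLayerSet_cover {c r d m d' : ℕ} (S : Fin m → Fin r → Fin d)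
    (hS : ∀ k, Function.Injective (S k)) (e : Fin c × Fin m ≃ Fin d') {a s η : ℝ} (ha : 0 ≤ a)
    (hs : 0 < s) (hη : 0 < η) :
    ∃ G : Finset (Matrix (Fin d') (Fin d) ℝ), (G : Set _) ⊆ convLayerSet S e a s ∧
      (∀ C ∈ convLayerSet S e a s, ∃ C' ∈ G, specNorm (C - C') ≤ η * s) ∧
      (G.card : ℝ) ≤ Real.exp (c * r * √(2 * √m * a / (η * s))) := by
  set Φ : Matrix (Fin c) (Fin r) ℝ → Matrix (Fin d') (Fin d) ℝ :=
    fun W ↦ reindex e (Equiv.refl (Fin d)) (gamma S W)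
  have hΦ : ∀ W W', specNorm (Φ W - Φ W') ≤ √m * ‖W - W'‖ := fun W W' ↦ by
    refine (specNorm_le_frobNorm _).trans_eq ?_
    rw [← frobNorm_eq_norm, ← frobNorm_gamma S hS, gamma_sub, ← frobNorm_reindex e]
    rfl
  obtain ⟨T, hTK, hT, hTcard⟩ := exists_finset_cover_card_le_exp (E := Matrix (Fin c) (Fin r) ℝ)
    (K := {W | frobNorm W ≤ a ∧ specNorm (Φ W) ≤ s}) ha
    (fun W hW ↦ mem_closedBall_zero_iff.2 ((frobNorm_eq_norm W).symm.trans_le hW.1))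
    (Real.sqrt_nonneg m) (mul_pos hη hs)
  refine ⟨T.image Φ, ?_, ?_, ?_⟩
  · simpa [Set.subset_def] using fun W hW ↦ ⟨(hTK hW).2, W, (hTK hW).1, rfl⟩
  · rintro _ ⟨hCs, W, hWa, rfl⟩
    obtain ⟨W', hW'T, hWW'⟩ := hT W ⟨hWa, hCs⟩
    exact ⟨Φ W', Finset.mem_image_of_mem Φ hW'T, (hΦ W W').trans hWW'⟩
  · refine (Nat.cast_le.2 Finset.card_image_le).trans (hTcard.trans_eq ?_)
    simp [Module.finrank_matrix, mul_assoc]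

end Matrix

section Network

variable {n L : ℕ} {d : ℕ → ℕ}
  {σ : ∀ i : ℕ, Matrix (Fin (d (i+1))) (Fin n) ℝ → Matrix (Fin (d (i+1))) (Fin n) ℝ}
  {ρ s : ℕ → ℝ} (X : Matrix (Fin (d 0)) (Fin n) ℝ)

theorem frobNorm_netOutput_le {C : ∀ i : ℕ, Matrix (Fin (d (i+1))) (Fin (d i)) ℝ} {ℓ : ℕ}
    (hℓ : ℓ ≤ L) (hρ : ∀ i < L, 0 ≤ ρ i)
    (hσ : ∀ i < L, ∀ A B, frobNorm (σ i A - σ i B) ≤ ρ i * frobNorm (A - B))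
    (hσ0 : ∀ i < L, σ i 0 = 0) (hC : ∀ i < L, specNorm (C i) ≤ s i) :
    frobNorm (netOutput d C σ X ℓ) ≤ (∏ i ∈ Finset.range ℓ, ρ i * s i) * frobNorm X := by
  induction ℓ with
  | zero => simp [netOutput]
  | succ ℓ ih =>
    have hℓL : ℓ < L := hℓ
    calc frobNorm (σ ℓ (C ℓ * netOutput d C σ X ℓ))
        ≤ ρ ℓ * frobNorm (C ℓ * netOutput d C σ X ℓ) := by
          simpa [hσ0 ℓ hℓL] using hσ ℓ hℓL (C ℓ * netOutput d C σ X ℓ) 0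
      _ ≤ ρ ℓ * (s ℓ * ((∏ i ∈ Finset.range ℓ, ρ i * s i) * frobNorm X)) := by
          gcongr
          · exact hρ ℓ hℓL
          · exact (frobNorm_mul_le _ _).trans <| mul_le_mul (hC ℓ hℓL) (ih hℓL.le)
              (frobNorm_nonneg _) ((specNorm_nonneg _).trans (hC ℓ hℓL))
      _ = (∏ i ∈ Finset.range (ℓ + 1), ρ i * s i) * frobNorm X := by
          rw [Finset.prod_range_succ]; ring

theorem frobNorm_netOutput_sub_le {C C' : ∀ i : ℕ, Matrix (Fin (d (i+1))) (Fin (d i)) ℝ}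
    {η : ℝ} {ℓ : ℕ} (hℓ : ℓ ≤ L) (hρ : ∀ i < L, 0 ≤ ρ i)
    (hσ : ∀ i < L, ∀ A B, frobNorm (σ i A - σ i B) ≤ ρ i * frobNorm (A - B))
    (hσ0 : ∀ i < L, σ i 0 = 0) (hC : ∀ i < L, specNorm (C i) ≤ s i)
    (hC' : ∀ i < L, specNorm (C' i) ≤ s i) (hCC' : ∀ i < L, specNorm (C i - C' i) ≤ η * s i) :
    frobNorm (netOutput d C σ X ℓ - netOutput d C' σ X ℓ)
      ≤ ℓ * η * (∏ i ∈ Finset.range ℓ, ρ i * s i) * frobNorm X := by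
  induction ℓ with
  | zero => simp [netOutput, frobNorm]
  | succ ℓ ih =>
    have hℓL : ℓ < L := hℓ
    set F := netOutput d C σ X ℓ
    set F' := netOutput d C' σ X ℓ
    set P := ∏ i ∈ Finset.range ℓ, ρ i * s i
    have hF : frobNorm F ≤ P * frobNorm X := frobNorm_netOutput_le X hℓL.le hρ hσ hσ0 hC
    calc frobNorm (σ ℓ (C ℓ * F) - σ ℓ (C' ℓ * F'))
        ≤ ρ ℓ * frobNorm ((C ℓ - C' ℓ) * F + C' ℓ * (F - F')) := by
          rw [Matrix.sub_mul, Matrix.mul_sub, sub_add_sub_cancel]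
          exact hσ ℓ hℓL _ _
      _ ≤ ρ ℓ * (η * s ℓ * (P * frobNorm X) + s ℓ * (ℓ * η * P * frobNorm X)) := by
          gcongr
          · exact hρ ℓ hℓL
          refine (frobNorm_add_le _ _).trans (add_le_add ?_ ?_)
          · exact (frobNorm_mul_le _ _).trans <| mul_le_mul (hCC' ℓ hℓL) hF
              (frobNorm_nonneg _) ((specNorm_nonneg _).trans (hCC' ℓ hℓL))
          · exact (frobNorm_mul_le _ _).trans <| mul_le_mul (hC' ℓ hℓL) (ih hℓL.le)
              (frobNorm_nonneg _) ((specNorm_nonneg _).trans (hC' ℓ hℓL))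
      _ = (ℓ + 1 : ℕ) * η * (∏ i ∈ Finset.range (ℓ + 1), ρ i * s i) * frobNorm X := by
          rw [Finset.prod_range_succ]; push_cast; ring

theorem exists_finset_netOutput_cover {η : ℝ}
    (𝒞 : ∀ i : Fin L, Set (Matrix (Fin (d (i+1))) (Fin (d i)) ℝ))
    (G : ∀ i : Fin L, Finset (Matrix (Fin (d (i+1))) (Fin (d i)) ℝ)) (hρ : ∀ i < L, 0 ≤ ρ i)
    (hσ : ∀ i < L, ∀ A B, frobNorm (σ i A - σ i B) ≤ ρ i * frobNorm (A - B))
    (hσ0 : ∀ i < L, σ i 0 = 0) (h𝒞 : ∀ i, ∀ C ∈ 𝒞 i, specNorm C ≤ s i)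
    (hG : ∀ i, (G i : Set _) ⊆ 𝒞 i)
    (hGcov : ∀ i, ∀ C ∈ 𝒞 i, ∃ C' ∈ G i, specNorm (C - C') ≤ η * s i) :
    ∃ U : Finset (Matrix (Fin (d L)) (Fin n) ℝ), U.card ≤ ∏ i, (G i).card ∧
      ∀ C : ∀ i : ℕ, Matrix (Fin (d (i+1))) (Fin (d i)) ℝ, (∀ i : Fin L, C i ∈ 𝒞 i) →
        ∃ u ∈ U, frobNorm (netOutput d C σ X L - u)
          ≤ L * η * (∏ i ∈ Finset.range L, ρ i * s i) * frobNorm X := by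
  classical
  let extend (g : ∀ i : Fin L, Matrix (Fin (d (i+1))) (Fin (d i)) ℝ) (i : ℕ) :
      Matrix (Fin (d (i+1))) (Fin (d i)) ℝ := if h : i < L then g ⟨i, h⟩ else 0
  refine ⟨(Fintype.piFinset G).image fun g ↦ netOutput d (extend g) σ X L,
    Finset.card_image_le.trans (Fintype.card_piFinset G).le, fun C hC ↦ ?_⟩
  choose g hgG hgC using fun i ↦ hGcov i (C i) (hC i)
  refine ⟨_, Finset.mem_image_of_mem _ (Fintype.mem_piFinset.2 hgG),
    frobNorm_netOutput_sub_le X le_rfl hρ hσ hσ0 (fun i hi ↦ h𝒞 ⟨i, hi⟩ _ (hC ⟨i, hi⟩))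
      (fun i hi ↦ ?_) (fun i hi ↦ ?_)⟩
  · simpa [extend, hi] using h𝒞 ⟨i, hi⟩ _ (hG _ (hgG ⟨i, hi⟩))
  · simpa [extend, hi] using hgC ⟨i, hi⟩

end Network

theorem Real.log_natCast_le_sum_of_le_prod {ι : Type*} [Fintype ι] {N : ℕ} {n : ι → ℕ}
    {b : ι → ℝ} (hb : ∀ i, 0 ≤ b i) (hN : N ≤ ∏ i, n i) (hn : ∀ i, (n i : ℝ) ≤ Real.exp (b i)) :
    Real.log N ≤ ∑ i, b i := by
  rcases N.eq_zero_or_pos with rfl | hN₀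
  · simpa using Finset.sum_nonneg fun i _ ↦ hb i
  rw [Real.log_le_iff_le_exp (by exact_mod_cast hN₀), Real.exp_sum]
  exact (Nat.cast_le.2 hN).trans <| by
    push_cast; exact Finset.prod_le_prod (fun _ _ ↦ by positivity) fun i _ ↦ hn i

theorem sum_sqrt_le_sqrt_card_mul_sum {ι : Type*} (t : Finset ι) {y : ι → ℝ}
    (hy : ∀ i ∈ t, 0 ≤ y i) : ∑ i ∈ t, √(y i) ≤ √(t.card * ∑ i ∈ t, y i) := by
  refine Real.le_sqrt_of_sq_le ((sq_sum_le_card_mul_sum_sq (s := t)).trans_eq ?_)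
  rw [Finset.sum_congr rfl fun i hi ↦ Real.sq_sqrt (hy i hi)]

theorem sum_layer_entropy_le {L : ℕ} {c r m d : ℕ → ℕ} (hd : ∀ i < L, d (i+1) = c i * m i)
    {a s : ℕ → ℝ} {η : ℝ} (hη : 0 ≤ η) (ha : ∀ i < L, 0 ≤ a i) (hs : ∀ i < L, 0 ≤ s i) :
    ∑ i ∈ Finset.range L, (c i : ℝ) * r i * √(2 * √(m i) * a i / (η * s i))
      ≤ √(2 / η * (∑ i ∈ Finset.range L,
          (c i : ℝ) ^ 2 * (r i : ℝ) ^ 2 * a i * √((d (i+1) : ℝ) / c i) / s i) * L) := by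
  have hterm : ∀ i ∈ Finset.range L, (c i : ℝ) * r i * √(2 * √(m i) * a i / (η * s i))
      = √(2 / η * ((c i : ℝ) ^ 2 * (r i : ℝ) ^ 2 * a i * √((d (i+1) : ℝ) / c i) / s i)) := by
    intro i hi
    have hiL := Finset.mem_range.1 hi
    rcases (c i).eq_zero_or_pos with hc | hc
    · simp [hc]
    rw [hd i hiL, Nat.cast_mul, mul_div_cancel_left₀ _ (by positivity), ← Real.sqrt_sq
      (by positivity : (0 : ℝ) ≤ c i * r i), ← Real.sqrt_mul (sq_nonneg _)]
    congr 1
    ring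
  rw [Finset.sum_congr rfl hterm, Finset.mul_sum, Finset.sum_mul]
  refine (sum_sqrt_le_sqrt_card_mul_sum _ fun i hi ↦ ?_).trans_eq ?_
  · have := ha i (Finset.mem_range.1 hi); have := hs i (Finset.mem_range.1 hi)
    positivity
  · rw [Finset.card_range, Finset.mul_sum]
    simp only [mul_comm (L : ℝ)]

/-- covering number bound for fully convolutional networks: for every ε > 0
there is a finite set `U` with `ln |U| ≤ (‖X‖_F · R_W / ε)^(1/2)` that ε-covers all outputs
of depth-`L` networks whose layers are `γᵢ(Wᵢ)` with `‖Wᵢ‖_F ≤ aᵢ` and `‖γᵢ(Wᵢ)‖_σ ≤ sᵢ`,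
where `R_W = (2∏ ρᵢ sᵢ)·(Σ cᵢ² rᵢ² aᵢ √(dᵢ/cᵢ)/sᵢ)·L²`. -/
theorem covering_number_fcnn (L n : ℕ) (d c r m : ℕ → ℕ)
    (hd : ∀ i < L, d (i+1) = c i * m i)
    (Smap : ∀ i : ℕ, Fin (m i) → Fin (r i) → Fin (d i))
    (hSmap : ∀ i < L, ∀ k, Function.Injective (Smap i k))
    (X : Matrix (Fin (d 0)) (Fin n) ℝ)
    (σ : ∀ i : ℕ, Matrix (Fin (d (i+1))) (Fin n) ℝ → Matrix (Fin (d (i+1))) (Fin n) ℝ)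
    (ρ s a : ℕ → ℝ)
    (hρ : ∀ i < L, 0 ≤ ρ i) (hs : ∀ i < L, 0 < s i) (ha : ∀ i < L, 0 < a i)
    (hσ : ∀ i < L, ∀ A B : Matrix (Fin (d (i+1))) (Fin n) ℝ,
      frobNorm (σ i A - σ i B) ≤ ρ i * frobNorm (A - B))
    (hσ0 : ∀ i < L, σ i 0 = 0) :
    ∀ ε > (0 : ℝ), ∃ U : Finset (Matrix (Fin (d L)) (Fin n) ℝ),
      Real.log U.card ≤ Real.sqrt (frobNorm X *
        ((2 * ∏ i ∈ Finset.range L, ρ i * s i) *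
          (∑ i ∈ Finset.range L,
            (c i : ℝ) ^ 2 * (r i : ℝ) ^ 2 * a i * Real.sqrt ((d (i+1) : ℝ) / (c i : ℝ)) / s i) *
          (L : ℝ) ^ 2) / ε) ∧
      ∀ C : ∀ i : ℕ, Matrix (Fin (d (i+1))) (Fin (d i)) ℝ,
        (∀ i (hi : i < L), specNorm (C i) ≤ s i ∧
          ∃ W : Matrix (Fin (c i)) (Fin (r i)) ℝ, frobNorm W ≤ a i ∧
            C i = Matrix.reindex (finProdFinEquiv.trans (finCongr (hd i hi).symm))
              (Equiv.refl (Fin (d i))) (gamma (Smap i) W)) →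
        ∃ u ∈ U, frobNorm (netOutput d C σ X L - u) ≤ ε := by
  intro ε hε
  set P := ∏ i ∈ Finset.range L, ρ i * s i
  by_cases hsmall : P * frobNorm X ≤ ε
  · refine ⟨{0}, by simp [Real.sqrt_nonneg], fun C hC ↦ ⟨0, by simp, ?_⟩⟩
    simpa using (frobNorm_netOutput_le X le_rfl hρ hσ hσ0 fun i hi ↦ (hC i hi).1).trans hsmall
  have hPX : 0 < P * frobNorm X := hε.trans (not_le.1 hsmall)
  set η := ε / (L * P * frobNorm X)
  have hη (i : Fin L) : 0 < η :=
    div_pos hε (by rw [mul_assoc]; exact mul_pos (by exact_mod_cast i.pos) hPX)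
  choose G hG hGcov hGcard using fun i : Fin L ↦ exists_finset_subset_convLayerSet_cover (Smap i)
    (hSmap i i.2) (finProdFinEquiv.trans (finCongr (hd i i.2).symm)) (ha i i.2).le (hs i i.2) (hη i)
  obtain ⟨U, hUcard, hU⟩ := exists_finset_netOutput_cover X _ G hρ hσ hσ0
    (fun i C hC ↦ hC.1) hG hGcov
  refine ⟨U, ?_, fun C hC ↦ ?_⟩
  · refine (Real.log_natCast_le_sum_of_le_prod (fun i ↦ by positivity) hUcard hGcard).trans ?_
    rw [Fin.sum_univ_eq_sum_range (fun i ↦ c i * r i * √(2 * √(m i) * a i / (η * s i)))]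
    refine (sum_layer_entropy_le hd (div_nonneg hε.le (by rw [mul_assoc]; positivity))
      (fun i hi ↦ (ha i hi).le) fun i hi ↦ (hs i hi).le).trans_eq ?_
    rw [div_div_eq_mul_div]
    congr 1
    ring
  · obtain ⟨u, hu, hdist⟩ := hU C fun i ↦ hC i i.2
    refine ⟨u, hu, hdist.trans ?_⟩
    rcases L.eq_zero_or_pos with rfl | hL
    · simpa using hε.le
    · refine le_of_eq ?_
      calc (L * η * P) * frobNorm X = η * (L * P * frobNorm X) := by ring
        _ = ε := div_mul_cancel₀ ε (by rw [mul_assoc]; exact mul_ne_zero (by positivity) hPX.ne')
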